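/- Let u : ℝ³ → ℝ be Euclidean C²-smooth and x a non-characteristic point of Σ = {u = 0}. Define for L > 0 the Gaussian curvature of Σ at x associated to the second Schouten–Van Kampen affine connection by K^{Σ,∇¹}(L) = h¹₁₁h¹₂₂ − h¹₁₂h¹₂₁, with q̄_L = q/l_L and h¹₁₁ = (l/l_L)(X₁(p̄)+X₂(q̄)) + (√L/2)p̄q̄r̄_L, h¹₁₂ = −(l_L/l)(q̄X₁(r̄_L) − p̄X₂(r̄_L)) − (√L/2)r̄_L²q̄² − (√L/2)(l/l_L)q̄q̄_L, h¹₂₁ = −(l_L/l)(q̄X₁(r̄_L) − p̄X₂(r̄_L)) − (√L/2) + (√L/2)(l²/l_L²) − (√L/2)r̄_L²q̄², h¹₂₂ = −(l²/l_L²)(r̄_L p̄ X₁(r/l) + r̄_L q̄ X₂(r/l)) + L^{−1/2}X₃(r̄_L) − (√L/2)(l/l_L)p̄q̄_L r̄_L − (√L/2)p̄q̄r̄_L³. Then K^{Σ,∇¹}(L) = K^{Σ,∇¹,∞} + O(L^{−1/2}) as L → +∞, i.e. there exist C ≥ 0 and L₀ > 0 such that |K^{Σ,∇¹}(L) − K^{Σ,∇¹,∞}|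 ≤ C·L^{−1/2} for all L ≥ L₀, where K^{Σ,∇¹,∞} = −(p̄q̄u_{x₃}/(2l))·(X₁(p̄)+X₂(q̄)) − (q̄²/2)·[ q̄X₁(u_{x₃}/l) − p̄X₂(u_{x₃}/l) + u_{x₃}²/l² ] (all quantities evaluated at x). -/

import Mathlib

/-!
Put `s = L^{-1/2}`. The fields `X₁, X₂, X₃` act as derivations, so `X_i r̄_L = s N_i / l_L³` and
`X_i(r/l) = s N_i / l³` with numerators `N_i` independent of `L`, while `l_L = √(l² + s² u_{x₃}²)`.
Every entry `h¹_{ij}` is then an explicit function of `s`; the singular factor `√L = 1/s` of `h¹₁₂`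
is compensated by `h¹₂₁ = O(s)`, so `K^{Σ,∇¹}(L)` is a function of `s` that is differentiable at
`s = 0`, where it equals `K^{Σ,∇¹,∞}`. Its first-order Taylor bound is the `O(L^{-1/2})` estimate.
-/

open Filter Real Topology

/-- The horizontal vector field `X₁ = ∂_{x₁} - (x₂/2)∂_{x₃}` acting on a function. -/
noncomputable def X1 (f : ℝ → ℝ → ℝ → ℝ) (x y z : ℝ) : ℝ :=
  deriv (fun s => f s y z) x - (y / 2) * deriv (fun s => f x y s) z

/-- The horizontal vector field `X₂ = ∂_{x₂} + (x₁/2)∂_{x₃}` acting on a function. -/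
noncomputable def X2 (f : ℝ → ℝ → ℝ → ℝ) (x y z : ℝ) : ℝ :=
  deriv (fun s => f x s z) y + (x / 2) * deriv (fun s => f x y s) z

/-- The vertical vector field `X₃ = ∂_{x₃}` acting on a function. -/
noncomputable def X3 (f : ℝ → ℝ → ℝ → ℝ) (x y z : ℝ) : ℝ :=
  deriv (fun s => f x y s) z

def uncurry3 (f : ℝ → ℝ → ℝ → ℝ) (v : ℝ × ℝ × ℝ) : ℝ := f v.1 v.2.1 v.2.2

def IsDerivAlong (X : (ℝ → ℝ → ℝ → ℝ) → ℝ → ℝ → ℝ → ℝ) (e : ℝ × ℝ × ℝ → ℝ × ℝ × ℝ) : Prop :=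
  ∀ f v, DifferentiableAt ℝ (uncurry3 f) v → X f v.1 v.2.1 v.2.2 = fderiv ℝ (uncurry3 f) v (e v)

section PartialDerivatives

variable {f : ℝ → ℝ → ℝ → ℝ} {x y z : ℝ}

theorem deriv_slice₁_eq_fderiv (hf : DifferentiableAt ℝ (uncurry3 f) (x, y, z)) :
    deriv (fun s => f s y z) x = fderiv ℝ (uncurry3 f) (x, y, z) (1, 0, 0) := by
  have h := hf.hasFDerivAt.comp_hasDerivAt x
    ((hasDerivAt_id x).prodMk ((hasDerivAt_const x y).prodMk (hasDerivAt_const x z)))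
  exact h.deriv

theorem deriv_slice₂_eq_fderiv (hf : DifferentiableAt ℝ (uncurry3 f) (x, y, z)) :
    deriv (fun s => f x s z) y = fderiv ℝ (uncurry3 f) (x, y, z) (0, 1, 0) := by
  have h := hf.hasFDerivAt.comp_hasDerivAt y
    ((hasDerivAt_const y x).prodMk ((hasDerivAt_id y).prodMk (hasDerivAt_const y z)))
  exact h.deriv

theorem deriv_slice₃_eq_fderiv (hf : DifferentiableAt ℝ (uncurry3 f) (x, y, z)) :
    deriv (fun s => f x y s) z = fderiv ℝ (uncurry3 f) (x, y, z) (0, 0, 1) := by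
  have h := hf.hasFDerivAt.comp_hasDerivAt z
    ((hasDerivAt_const z x).prodMk ((hasDerivAt_const z y).prodMk (hasDerivAt_id z)))
  exact h.deriv

end PartialDerivatives

theorem isDerivAlong_X1 : IsDerivAlong X1 fun v => (1, 0, -(v.2.1 / 2)) := by
  rintro f ⟨x, y, z⟩ hf
  dsimp only
  have he : ((1 : ℝ), (0 : ℝ), -(y / 2)) = (1, 0, 0) - (y / 2) • (0, 0, 1) := by simp
  rw [he, map_sub, map_smul, smul_eq_mul, X1, deriv_slice₁_eq_fderiv hf,
    deriv_slice₃_eq_fderiv hf]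

theorem isDerivAlong_X2 : IsDerivAlong X2 fun v => (0, 1, v.1 / 2) := by
  rintro f ⟨x, y, z⟩ hf
  dsimp only
  have he : ((0 : ℝ), (1 : ℝ), x / 2) = (0, 1, 0) + (x / 2) • (0, 0, 1) := by simp
  rw [he, map_add, map_smul, smul_eq_mul, X2, deriv_slice₂_eq_fderiv hf,
    deriv_slice₃_eq_fderiv hf]

theorem isDerivAlong_X3 : IsDerivAlong X3 fun _ => (0, 0, 1) := by
  rintro f ⟨x, y, z⟩ hf
  exact deriv_slice₃_eq_fderiv hf

theorem IsDerivAlong.differentiable_uncurry3 {X : (ℝ → ℝ → ℝ → ℝ) → ℝ → ℝ → ℝ → ℝ}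
    {e : ℝ × ℝ × ℝ → ℝ × ℝ × ℝ} (hX : IsDerivAlong X e) (he : Differentiable ℝ e)
    {u : ℝ → ℝ → ℝ → ℝ} (hu : ContDiff ℝ 2 (uncurry3 u)) :
    Differentiable ℝ (uncurry3 (X u)) := by
  have hud : Differentiable ℝ (uncurry3 u) := hu.differentiable (by norm_num)
  have hXu : uncurry3 (X u) = fun v => fderiv ℝ (uncurry3 u) v (e v) :=
    funext fun v => hX u v (hud v)
  rw [hXu]
  exact ((hu.fderiv_right (m := 1) (by norm_num)).differentiable one_ne_zero).clm_apply he

theorem HasFDerivAt.div_sqrt {E : Type*} [NormedAddCommGroup E] [NormedSpace ℝ E]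
    {V G : E → ℝ} {V' G' : E →L[ℝ] ℝ} {v : E} (hV : HasFDerivAt V V' v)
    (hG : HasFDerivAt G G' v) (hpos : 0 < G v) :
    HasFDerivAt (fun w => V w / √(G w))
      ((√(G v) ^ 3)⁻¹ • (G v • V' - (V v / 2) • G')) v := by
  have hs : √(G v) ≠ 0 := (sqrt_pos.2 hpos).ne'
  have h2 : √(G v) ^ 2 = G v := sq_sqrt hpos.le
  have h := hV.fun_mul ((hasFDerivAt_inv hs).comp v (hG.sqrt hpos.ne'))
  simp only [div_eq_mul_inv]
  refine h.congr_fderiv (ContinuousLinearMap.ext fun e => ?_)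
  simp only [one_div, mul_inv_rev, ContinuousLinearMap.comp_smulₛₗ, ringHom_apply,
    Function.comp_apply, add_apply, smul_apply, ContinuousLinearMap.comp_apply,
    ContinuousLinearMap.toSpanSingleton_apply, smul_eq_mul, mul_neg, sub_apply]
  field_simp
  linear_combination (2 * V' e) * h2

/-- The numerator of `X (X₃u / √((X₁u)² + (X₂u)² + t (X₃u)²))`, independent of `t`. -/
noncomputable def verticalNumerator (X : (ℝ → ℝ → ℝ → ℝ) → ℝ → ℝ → ℝ → ℝ)
    (u : ℝ → ℝ → ℝ → ℝ) (x y z : ℝ) : ℝ :=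
  (X1 u x y z ^ 2 + X2 u x y z ^ 2) * X (X3 u) x y z
    - X3 u x y z * (X1 u x y z * X (X1 u) x y z + X2 u x y z * X (X2 u) x y z)

theorem IsDerivAlong.apply_div_sqrt {X : (ℝ → ℝ → ℝ → ℝ) → ℝ → ℝ → ℝ → ℝ}
    {e : ℝ × ℝ × ℝ → ℝ × ℝ × ℝ} (hX : IsDerivAlong X e) {u g : ℝ → ℝ → ℝ → ℝ}
    (hu : ContDiff ℝ 2 (uncurry3 u)) {k t x y z : ℝ} (ht : 0 ≤ t)
    (hg : ∀ a b c, g a b c = (X3 u a b c / k) /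
      √(X1 u a b c ^ 2 + X2 u a b c ^ 2 + t * (X3 u a b c / k) ^ 2))
    (hnc : 0 < X1 u x y z ^ 2 + X2 u x y z ^ 2) :
    X g x y z = verticalNumerator X u x y z / k /
      √(X1 u x y z ^ 2 + X2 u x y z ^ 2 + t * (X3 u x y z / k) ^ 2) ^ 3 := by
  set v : ℝ × ℝ × ℝ := (x, y, z)
  have hP := (isDerivAlong_X1.differentiable_uncurry3 (by fun_prop) hu v).hasFDerivAt
  have hQ := (isDerivAlong_X2.differentiable_uncurry3 (by fun_prop) hu v).hasFDerivAt
  have hW := (isDerivAlong_X3.differentiable_uncurry3 (by fun_prop) hu v).hasFDerivAt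
  have hV := hW.mul_const k⁻¹
  have hG := ((hP.pow 2).add (hQ.pow 2)).add ((hV.pow 2).const_mul t)
  have hpos : 0 < X1 u x y z ^ 2 + X2 u x y z ^ 2 + t * (X3 u x y z * k⁻¹) ^ 2 := by
    positivity
  have huncurry : uncurry3 g = fun v => uncurry3 (X3 u) v * k⁻¹ /
      √(uncurry3 (X1 u) v ^ 2 + uncurry3 (X2 u) v ^ 2 + t * (uncurry3 (X3 u) v * k⁻¹) ^ 2) := by
    funext v
    simp only [uncurry3, hg, div_eq_mul_inv]
  have hg' := (hV.div_sqrt hG hpos).congr_of_eventuallyEq (EventuallyEq.of_eq huncurry)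
  have hXP : X (X1 u) x y z = fderiv ℝ (uncurry3 (X1 u)) v (e v) := hX _ v hP.differentiableAt
  have hXQ : X (X2 u) x y z = fderiv ℝ (uncurry3 (X2 u)) v (e v) := hX _ v hQ.differentiableAt
  have hXW : X (X3 u) x y z = fderiv ℝ (uncurry3 (X3 u)) v (e v) := hX _ v hW.differentiableAt
  rw [hX g v hg'.differentiableAt, hg'.fderiv, verticalNumerator, hXP, hXQ, hXW]
  simp only [uncurry3, v, Pi.add_apply, div_eq_mul_inv, Nat.add_one_sub_one, pow_one,
    nsmul_eq_mul, Nat.cast_ofNat, smul_add, smul_apply, sub_apply, smul_eq_mul, add_apply]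
  ring

section RegularizedCurvature

variable (l p q w A D₁ D₂ D₃ : ℝ)

/-- `K(L)` in the variable `s = L^{-1/2}`, with `μ = l_L`, `w = u_{x₃}`, `A = X₁p̄ + X₂q̄` and
`Dᵢ = verticalNumerator Xᵢ u`. -/
noncomputable def regularizedCurvature (s : ℝ) : ℝ :=
  let μ := √(l ^ 2 + (s * w) ^ 2)
  let b := (-(q * D₁ - p * D₂) - w ^ 2 * q ^ 2 / 2) / (l ^ 2 * μ ^ 2)
  let c := b - w ^ 2 / (2 * μ ^ 2)
  (l ^ 3 * A + p * q * w / 2) / (l ^ 2 * μ)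
      * ((s ^ 2 * (l ^ 2 * D₃ - w * (p * D₁ + q * D₂)) - p * q * w * l ^ 2 / 2
        - s ^ 2 * p * q * w ^ 3 / 2) / (l ^ 2 * μ ^ 3))
    - s ^ 2 * b * c + q ^ 2 * c / (2 * μ ^ 2)

variable {l p q w A D₁ D₂ D₃}

theorem differentiable_regularizedCurvature (hl : l ≠ 0) :
    Differentiable ℝ (regularizedCurvature l p q w A D₁ D₂ D₃) := by
  intro s
  have hμ : √(l ^ 2 + (s * w) ^ 2) ≠ 0 := (sqrt_pos.2 (by positivity)).ne'
  unfold regularizedCurvature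
  dsimp only
  fun_prop (disch := first | positivity | exact hμ)

theorem regularizedCurvature_zero (hl : 0 < l) (hlpq : l ^ 2 = p ^ 2 + q ^ 2) :
    regularizedCurvature l p q w A D₁ D₂ D₃ 0 =
      -((p / l) * (q / l) * w / (2 * l)) * A
        - ((q / l) ^ 2 / 2) * ((q / l) * (D₁ / l ^ 3) - (p / l) * (D₂ / l ^ 3) + w ^ 2 / l ^ 2) := by
  simp only [regularizedCurvature, zero_mul, zero_pow two_ne_zero, add_zero, sqrt_sq hl.le]
  field_simp
  linear_combination (l ^ 2 * q ^ 2 * w ^ 2) * hlpq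

theorem regularizedCurvature_inv_eq {r μ h₁₁ h₁₂ h₂₁ h₂₂ : ℝ} (hl : 0 < l) (hr : 0 < r)
    (hμ : μ = √(l ^ 2 + (w / r) ^ 2))
    (h11 : h₁₁ = (l / μ) * A + (r / 2) * (p / l) * (q / l) * (w / r / μ))
    (h12 : h₁₂ = -(μ / l) * ((q / l) * (D₁ / r / μ ^ 3) - (p / l) * (D₂ / r / μ ^ 3))
      - (r / 2) * (w / r / μ) ^ 2 * (q / l) ^ 2 - (r / 2) * (l / μ) * (q / l) * (q / μ))
    (h21 : h₂₁ = -(μ / l) * ((q / l) * (D₁ / r / μ ^ 3) - (p / l) * (D₂ / r / μ ^ 3))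
      - r / 2 + (r / 2) * (l ^ 2 / μ ^ 2) - (r / 2) * (w / r / μ) ^ 2 * (q / l) ^ 2)
    (h22 : h₂₂ = -(l ^ 2 / μ ^ 2) * ((w / r / μ) * (p / l) * (D₁ / r / l ^ 3)
        + (w / r / μ) * (q / l) * (D₂ / r / l ^ 3)) + (1 / r) * (D₃ / r / μ ^ 3)
      - (r / 2) * (l / μ) * (p / l) * (q / μ) * (w / r / μ)
      - (r / 2) * (p / l) * (q / l) * (w / r / μ) ^ 3) :
    h₁₁ * h₂₂ - h₁₂ * h₂₁ = regularizedCurvature l p q w A D₁ D₂ D₃ r⁻¹ := by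
  have hμpos : 0 < μ := hμ ▸ sqrt_pos.2 (by positivity)
  have hμsq : μ ^ 2 * r ^ 2 = l ^ 2 * r ^ 2 + w ^ 2 := by
    rw [hμ, sq_sqrt (by positivity)]; field_simp
  set b := (-(q * D₁ - p * D₂) - w ^ 2 * q ^ 2 / 2) / (l ^ 2 * μ ^ 2) with hb
  have e11 : h₁₁ = (l ^ 3 * A + p * q * w / 2) / (l ^ 2 * μ) := by
    rw [h11]; field_simp
  have e12 : h₁₂ = r⁻¹ * b - r * q ^ 2 / (2 * μ ^ 2) := by
    rw [h12, hb]; field_simp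
  have e21 : h₂₁ = r⁻¹ * (b - w ^ 2 / (2 * μ ^ 2)) := by
    rw [h21, hb]; field_simp; linear_combination (-l ^ 2) * hμsq
  have e22 : h₂₂ = (r⁻¹ ^ 2 * (l ^ 2 * D₃ - w * (p * D₁ + q * D₂)) - p * q * w * l ^ 2 / 2
        - r⁻¹ ^ 2 * p * q * w ^ 3 / 2) / (l ^ 2 * μ ^ 3) := by
    rw [h22]; field_simp; ring
  rw [regularizedCurvature, inv_mul_eq_div, ← hμ, e11, e12, e21, e22, hb]
  field_simp
  ring

end RegularizedCurvature

theorem exists_abs_sub_le_div_sqrt_of_differentiableAt {F K : ℝ → ℝ}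
    (hF : DifferentiableAt ℝ F 0) (hK : ∀ L, 0 < L → K L = F (√L)⁻¹) :
    ∃ C : ℝ, 0 ≤ C ∧ ∃ L₀ : ℝ, 0 < L₀ ∧ ∀ L : ℝ, L₀ ≤ L → |K L - F 0| ≤ C / √L := by
  obtain ⟨C, hC, hbound⟩ := hF.hasDerivAt.isBigO_sub.exists_nonneg
  have hs : Tendsto (fun L : ℝ => (√L)⁻¹) atTop (𝓝 0) :=
    tendsto_inv_atTop_zero.comp tendsto_sqrt_atTop
  obtain ⟨L₀, hL₀⟩ := eventually_atTop.1
    ((hs.eventually hbound.bound).and (eventually_gt_atTop 0))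
  refine ⟨C, hC, max L₀ 1, by positivity, fun L hL => ?_⟩
  obtain ⟨hFL, hL⟩ := hL₀ L (le_of_max_le_left hL)
  rw [hK L hL, div_eq_mul_inv]
  simpa [abs_of_pos (sqrt_pos.2 hL)] using hFL

theorem gaussian_curvature_expansion_second_SvK_general
    (u pb qb uol : ℝ → ℝ → ℝ → ℝ) (rbF rol : ℝ → ℝ → ℝ → ℝ → ℝ)
    (lL qbL h11 h12 h21 h22 K : ℝ → ℝ) (l0 Kinf x y z : ℝ)
    (hu : ContDiff ℝ 2 (fun v : ℝ × ℝ × ℝ => u v.1 v.2.1 v.2.2))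
    (hl0 : l0 = Real.sqrt ((X1 u x y z)^2 + (X2 u x y z)^2))
    (hnc : l0 ≠ 0)
    (hpb : ∀ a b c, pb a b c = X1 u a b c / Real.sqrt ((X1 u a b c)^2 + (X2 u a b c)^2))
    (hqb : ∀ a b c, qb a b c = X2 u a b c / Real.sqrt ((X1 u a b c)^2 + (X2 u a b c)^2))
    (huol : ∀ a b c, uol a b c = X3 u a b c / Real.sqrt ((X1 u a b c)^2 + (X2 u a b c)^2))
    (hrbF : ∀ L a b c, rbF L a b c = (X3 u a b c / Real.sqrt L) /
      Real.sqrt ((X1 u a b c)^2 + (X2 u a b c)^2 + (X3 u a b c / Real.sqrt L)^2))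
    (hrol : ∀ L a b c, rol L a b c = (X3 u a b c / Real.sqrt L) /
      Real.sqrt ((X1 u a b c)^2 + (X2 u a b c)^2))
    (hlL : ∀ L, lL L = Real.sqrt ((X1 u x y z)^2 + (X2 u x y z)^2
      + (X3 u x y z / Real.sqrt L)^2))
    (hqbL : ∀ L, qbL L = X2 u x y z / lL L)
    (hh11 : ∀ L, h11 L = (l0 / lL L) * (X1 pb x y z + X2 qb x y z)
      + (Real.sqrt L / 2) * pb x y z * qb x y z * rbF L x y z)
    (hh12 : ∀ L, h12 L = -(lL L / l0) * (qb x y z * X1 (rbF L) x y z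
      - pb x y z * X2 (rbF L) x y z)
      - (Real.sqrt L / 2) * (rbF L x y z)^2 * (qb x y z)^2
      - (Real.sqrt L / 2) * (l0 / lL L) * qb x y z * qbL L)
    (hh21 : ∀ L, h21 L = -(lL L / l0) * (qb x y z * X1 (rbF L) x y z
      - pb x y z * X2 (rbF L) x y z) - Real.sqrt L / 2
      + (Real.sqrt L / 2) * (l0^2 / (lL L)^2)
      - (Real.sqrt L / 2) * (rbF L x y z)^2 * (qb x y z)^2)
    (hh22 : ∀ L, h22 L = -(l0^2 / (lL L)^2) * (rbF L x y z * pb x y z * X1 (rol L) x y z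
      + rbF L x y z * qb x y z * X2 (rol L) x y z)
      + (1 / Real.sqrt L) * X3 (rbF L) x y z
      - (Real.sqrt L / 2) * (l0 / lL L) * pb x y z * qbL L * rbF L x y z
      - (Real.sqrt L / 2) * pb x y z * qb x y z * (rbF L x y z)^3)
    (hK : ∀ L, K L = h11 L * h22 L - h12 L * h21 L)
    (hKinf : Kinf = -(pb x y z * qb x y z * X3 u x y z / (2 * l0))
        * (X1 pb x y z + X2 qb x y z)
      - ((qb x y z)^2 / 2) * (qb x y z * X1 uol x y z - pb x y z * X2 uol x y z
        + (X3 u x y z)^2 / l0^2)) :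
    ∃ C : ℝ, 0 ≤ C ∧ ∃ L₀ : ℝ, 0 < L₀ ∧ ∀ L : ℝ, L₀ ≤ L →
      |K L - Kinf| ≤ C / Real.sqrt L := by
  set p := X1 u x y z
  set q := X2 u x y z
  set w := X3 u x y z
  set A := X1 pb x y z + X2 qb x y z
  have hpq : 0 < p ^ 2 + q ^ 2 :=
    lt_of_le_of_ne (by positivity) fun h => hnc (by rw [hl0, ← h, sqrt_zero])
  have hl0pos : 0 < l0 := hl0 ▸ sqrt_pos.2 hpq
  have hl2 : l0 ^ 2 = p ^ 2 + q ^ 2 := by rw [hl0, sq_sqrt hpq.le]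
  have hpbv : pb x y z = p / l0 := by rw [hpb, ← hl0]
  have hqbv : qb x y z = q / l0 := by rw [hqb, ← hl0]
  have hrbv (L : ℝ) : rbF L x y z = w / √L / lL L := by rw [hrbF, hlL]
  have hXuol {X e} (hX : IsDerivAlong X e) :
      X uol x y z = verticalNumerator X u x y z / l0 ^ 3 := by
    rw [hX.apply_div_sqrt (k := 1) hu le_rfl (fun a b c => by rw [huol, div_one, zero_mul,
      add_zero]) hpq, div_one, zero_mul, add_zero, ← hl0]
  have hXrol {X e} (hX : IsDerivAlong X e) (L : ℝ) :
      X (rol L) x y z = verticalNumerator X u x y z / √L / l0 ^ 3 := by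
    rw [hX.apply_div_sqrt hu le_rfl (fun a b c => by rw [hrol, zero_mul, add_zero]) hpq,
      zero_mul, add_zero, ← hl0]
  have hXrbF {X e} (hX : IsDerivAlong X e) (L : ℝ) :
      X (rbF L) x y z = verticalNumerator X u x y z / √L / lL L ^ 3 := by
    rw [hX.apply_div_sqrt hu zero_le_one (fun a b c => by rw [hrbF, one_mul]) hpq, one_mul,
      hlL]
  set F := regularizedCurvature l0 p q w A (verticalNumerator X1 u x y z)
    (verticalNumerator X2 u x y z) (verticalNumerator X3 u x y z)
  have hKF (L : ℝ) (hL : 0 < L) : K L = F (√L)⁻¹ := by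
    rw [hK]
    refine regularizedCurvature_inv_eq (μ := lL L) hl0pos (sqrt_pos.2 hL)
      (by rw [hlL, hl2]) ?_ ?_ ?_ ?_
    · rw [hh11, hpbv, hqbv, hrbv]
    · rw [hh12, hpbv, hqbv, hrbv, hqbL, hXrbF isDerivAlong_X1, hXrbF isDerivAlong_X2]
    · rw [hh21, hpbv, hqbv, hrbv, hXrbF isDerivAlong_X1, hXrbF isDerivAlong_X2]
    · rw [hh22, hpbv, hqbv, hrbv, hqbL, hXrol isDerivAlong_X1, hXrol isDerivAlong_X2,
        hXrbF isDerivAlong_X3]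
  have hF0 : F 0 = Kinf := by
    rw [hKinf, hpbv, hqbv, hXuol isDerivAlong_X1, hXuol isDerivAlong_X2]
    exact regularizedCurvature_zero hl0pos hl2
  exact hF0 ▸ exists_abs_sub_le_div_sqrt_of_differentiableAt
    (differentiable_regularizedCurvature hl0pos.ne' 0) hKF

theorem gaussian_curvature_expansion_second_SvK
    (u pb qb uol : ℝ → ℝ → ℝ → ℝ) (rbF rol : ℝ → ℝ → ℝ → ℝ → ℝ)
    (lL qbL h11 h12 h21 h22 K : ℝ → ℝ) (l0 Kinf x y z : ℝ)
    (hu : ContDiff ℝ 2 (fun v : ℝ × ℝ × ℝ => u v.1 v.2.1 v.2.2))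
    (hx : u x y z = 0)
    (hl0 : l0 = Real.sqrt ((X1 u x y z)^2 + (X2 u x y z)^2))
    (hnc : l0 ≠ 0)
    (hpb : ∀ a b c, pb a b c = X1 u a b c / Real.sqrt ((X1 u a b c)^2 + (X2 u a b c)^2))
    (hqb : ∀ a b c, qb a b c = X2 u a b c / Real.sqrt ((X1 u a b c)^2 + (X2 u a b c)^2))
    (huol : ∀ a b c, uol a b c = X3 u a b c / Real.sqrt ((X1 u a b c)^2 + (X2 u a b c)^2))
    (hrbF : ∀ L a b c, rbF L a b c = (X3 u a b c / Real.sqrt L) /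
      Real.sqrt ((X1 u a b c)^2 + (X2 u a b c)^2 + (X3 u a b c / Real.sqrt L)^2))
    (hrol : ∀ L a b c, rol L a b c = (X3 u a b c / Real.sqrt L) /
      Real.sqrt ((X1 u a b c)^2 + (X2 u a b c)^2))
    (hlL : ∀ L, lL L = Real.sqrt ((X1 u x y z)^2 + (X2 u x y z)^2
      + (X3 u x y z / Real.sqrt L)^2))
    (hqbL : ∀ L, qbL L = X2 u x y z / lL L)
    (hh11 : ∀ L, h11 L = (l0 / lL L) * (X1 pb x y z + X2 qb x y z)
      + (Real.sqrt L / 2) * pb x y z * qb x y z * rbF L x y z)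
    (hh12 : ∀ L, h12 L = -(lL L / l0) * (qb x y z * X1 (rbF L) x y z
      - pb x y z * X2 (rbF L) x y z)
      - (Real.sqrt L / 2) * (rbF L x y z)^2 * (qb x y z)^2
      - (Real.sqrt L / 2) * (l0 / lL L) * qb x y z * qbL L)
    (hh21 : ∀ L, h21 L = -(lL L / l0) * (qb x y z * X1 (rbF L) x y z
      - pb x y z * X2 (rbF L) x y z) - Real.sqrt L / 2
      + (Real.sqrt L / 2) * (l0^2 / (lL L)^2)
      - (Real.sqrt L / 2) * (rbF L x y z)^2 * (qb x y z)^2)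
    (hh22 : ∀ L, h22 L = -(l0^2 / (lL L)^2) * (rbF L x y z * pb x y z * X1 (rol L) x y z
      + rbF L x y z * qb x y z * X2 (rol L) x y z)
      + (1 / Real.sqrt L) * X3 (rbF L) x y z
      - (Real.sqrt L / 2) * (l0 / lL L) * pb x y z * qbL L * rbF L x y z
      - (Real.sqrt L / 2) * pb x y z * qb x y z * (rbF L x y z)^3)
    (hK : ∀ L, K L = h11 L * h22 L - h12 L * h21 L)
    (hKinf : Kinf = -(pb x y z * qb x y z * X3 u x y z / (2 * l0))
        * (X1 pb x y z + X2 qb x y z)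
      - ((qb x y z)^2 / 2) * (qb x y z * X1 uol x y z - pb x y z * X2 uol x y z
        + (X3 u x y z)^2 / l0^2)) :
    ∃ C : ℝ, 0 ≤ C ∧ ∃ L₀ : ℝ, 0 < L₀ ∧ ∀ L : ℝ, L₀ ≤ L →
      |K L - Kinf| ≤ C / Real.sqrt L :=
  gaussian_curvature_expansion_second_SvK_general u pb qb uol rbF rol lL qbL h11 h12 h21 h22 K l0
    Kinf x y z hu hl0 hnc hpb hqb huol hrbF hrol hlL hqbL hh11 hh12 hh21 hh22 hK hKinf
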